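/- arXiv:0811.4773 — 2 statements merged into one kernel-verified Lean document; each statement's English description precedes it below -/
import Mathlib

section
/- Let X, Y, Z, U, W be random variables taking values in finite alphabets such that U is conditionally independent of the pair (X,Z) given Y, and W is conditionally independent of the pair (Y,Z) given (U,X). Then the conditional mutual informations satisfy the identity I(X;W|U,Z) + I(Y;U|Z) = I(X,Y;W,U|Z), and consequently I(X;W|U,Z) + I(Y;U|Z) ≥ I(X;W|Z). -/
open scoped Classical
open Finset

/-- Conditional independence of `A` and `C` given `B` for a pmf `P` on a finite sample
space, in cross-multiplication form. -/
def CondIndepPmf {Ω α β γ : Type*} [Fintype Ω]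
    (P : Ω → ℝ) (A : Ω → α) (B : Ω → β) (C : Ω → γ) : Prop :=
  ∀ (a : α) (b : β) (c : γ),
    (∑ ω, if A ω = a ∧ B ω = b ∧ C ω = c then P ω else 0) *
      (∑ ω, if B ω = b then P ω else 0) =
    (∑ ω, if A ω = a ∧ B ω = b then P ω else 0) *
      (∑ ω, if B ω = b ∧ C ω = c then P ω else 0)

/-- The conditional mutual information `I(A;B|C)` of random variables `A`, `B`, `C`
(finite alphabets) defined from a pmf `P` on a finite sample space:
`I(A;B|C) = ∑ p(a,b,c) log ( p(a,b|c) / (p(a|c) p(b|c)) )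
          = ∑ p(a,b,c) log ( p(a,b,c) p(c) / (p(a,c) p(b,c)) )`,
with terms where `p(a,b,c) = 0` taken to be `0`. -/
noncomputable def condMI {Ω α β γ : Type*} [Fintype Ω] [Fintype α] [Fintype β] [Fintype γ]
    (P : Ω → ℝ) (A : Ω → α) (B : Ω → β) (C : Ω → γ) : ℝ :=
  ∑ a, ∑ b, ∑ c,
    (∑ ω, if A ω = a ∧ B ω = b ∧ C ω = c then P ω else 0) *
      Real.log
        ((∑ ω, if A ω = a ∧ B ω = b ∧ C ω = c then P ω else 0) *
            (∑ ω, if C ω = c then P ω else 0) /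
          ((∑ ω, if A ω = a ∧ C ω = c then P ω else 0) *
            (∑ ω, if B ω = b ∧ C ω = c then P ω else 0)))

section aux
variable {Ω : Type*} [Fintype Ω]

noncomputable def pP (P : Ω → ℝ) (E : Ω → Prop) : ℝ := ∑ ω, if E ω then P ω else 0

variable {P : Ω → ℝ}

lemma pP_congr {E F : Ω → Prop} (h : ∀ ω, E ω ↔ F ω) : pP P E = pP P F := by
  unfold pP
  refine Finset.sum_congr rfl fun ω _ => ?_
  simp [h ω]

lemma pP_nonneg (hP0 : ∀ ω, 0 ≤ P ω) (E : Ω → Prop) : 0 ≤ pP P E :=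
  Finset.sum_nonneg fun ω _ => by split <;> [exact hP0 ω; exact le_refl 0]

lemma pP_mono (hP0 : ∀ ω, 0 ≤ P ω) {E F : Ω → Prop} (h : ∀ ω, E ω → F ω) :
    pP P E ≤ pP P F := by
  refine Finset.sum_le_sum fun ω _ => ?_
  by_cases hE : E ω
  · simp [hE, h ω hE]
  · simp only [hE, if_false]
    split <;> [exact hP0 ω; exact le_refl 0]

lemma pP_eq_zero (hP0 : ∀ ω, 0 ≤ P ω) {E F : Ω → Prop} (h : ∀ ω, E ω → F ω)
    (hF : pP P F = 0) : pP P E = 0 :=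
  le_antisymm (hF ▸ pP_mono hP0 h) (pP_nonneg hP0 E)

lemma pP_sum_fiber {α : Type*} [Fintype α] (A : Ω → α) (E : Ω → Prop) :
    ∑ a, pP P (fun ω => A ω = a ∧ E ω) = pP P E := by
  unfold pP
  rw [Finset.sum_comm]
  refine Finset.sum_congr rfl fun ω _ => ?_
  by_cases hE : E ω <;> simp [hE]

noncomputable def mi3 (P : Ω → ℝ) {α β γ : Type*} [Fintype α] [Fintype β] [Fintype γ]
    (A : Ω → α) (B : Ω → β) (C : Ω → γ) : ℝ :=
  ∑ a, ∑ b, ∑ c,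
    pP P (fun ω => A ω = a ∧ B ω = b ∧ C ω = c) *
      Real.log
        (pP P (fun ω => A ω = a ∧ B ω = b ∧ C ω = c) * pP P (fun ω => C ω = c) /
          (pP P (fun ω => A ω = a ∧ C ω = c) * pP P (fun ω => B ω = b ∧ C ω = c)))

lemma mi3_symm {α β γ : Type*} [Fintype α] [Fintype β] [Fintype γ]
    (A : Ω → α) (B : Ω → β) (C : Ω → γ) : mi3 P A B C = mi3 P B A C := by
  unfold mi3
  rw [Finset.sum_comm]
  refine Finset.sum_congr rfl fun b _ => Finset.sum_congr rfl fun a _ =>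
    Finset.sum_congr rfl fun c _ => ?_
  rw [pP_congr (F := fun ω => B ω = b ∧ A ω = a ∧ C ω = c) (by tauto),
    mul_comm (pP P (fun ω => A ω = a ∧ C ω = c))]

lemma log_split {x pabc pc pac pbc pbdc : ℝ}
    (hx : 0 ≤ x) (h1 : x ≤ pabc) (h2 : pabc ≤ pbc) (h3 : pbc ≤ pc)
    (h4 : x ≤ pac) (h5 : x ≤ pbdc) :
    x * Real.log (x * pc / (pac * pbdc)) =
      x * Real.log (pabc * pc / (pac * pbc)) +
        x * Real.log (x * pbc / (pabc * pbdc)) := by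
  rcases hx.eq_or_lt with h0 | h0
  · simp [← h0]
  have habc : 0 < pabc := lt_of_lt_of_le h0 h1
  have hbc : 0 < pbc := lt_of_lt_of_le habc h2
  have hc : 0 < pc := lt_of_lt_of_le hbc h3
  have hac : 0 < pac := lt_of_lt_of_le h0 h4
  have hbdc : 0 < pbdc := lt_of_lt_of_le h0 h5
  have key : x * pc / (pac * pbdc) =
      (pabc * pc / (pac * pbc)) * (x * pbc / (pabc * pbdc)) := by
    field_simp
  rw [key, Real.log_mul (by positivity) (by positivity), mul_add]

lemma mi3_chain (hP0 : ∀ ω, 0 ≤ P ω) {α β γ δ : Type*}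
    [Fintype α] [Fintype β] [Fintype γ] [Fintype δ]
    (A : Ω → α) (B : Ω → β) (D : Ω → δ) (C : Ω → γ) :
    mi3 P A (fun ω => (B ω, D ω)) C =
      mi3 P A B C + mi3 P A D (fun ω => (B ω, C ω)) := by
  set p4 : α → β → δ → γ → ℝ := fun a b d c =>
    pP P (fun ω => A ω = a ∧ B ω = b ∧ D ω = d ∧ C ω = c) with hp4
  set pabc : α → β → γ → ℝ := fun a b c =>
    pP P (fun ω => A ω = a ∧ B ω = b ∧ C ω = c) with hpabc
  set pbdc : β → δ → γ → ℝ := fun b d c =>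
    pP P (fun ω => B ω = b ∧ D ω = d ∧ C ω = c) with hpbdc
  set pbc : β → γ → ℝ := fun b c => pP P (fun ω => B ω = b ∧ C ω = c) with hpbc
  set pac : α → γ → ℝ := fun a c => pP P (fun ω => A ω = a ∧ C ω = c) with hpac
  set pc : γ → ℝ := fun c => pP P (fun ω => C ω = c) with hpc
  have hm : ∀ a b c, pabc a b c = ∑ d, p4 a b d c := by
    intro a b c
    rw [hpabc]
    dsimp only
    rw [← pP_sum_fiber D (fun ω => A ω = a ∧ B ω = b ∧ C ω = c)]
    exact Finset.sum_congr rfl fun d _ => pP_congr (by tauto)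
  have hL : mi3 P A (fun ω => (B ω, D ω)) C =
      ∑ a, ∑ b, ∑ d, ∑ c, p4 a b d c *
        Real.log (p4 a b d c * pc c / (pac a c * pbdc b d c)) := by
    unfold mi3
    refine Finset.sum_congr rfl fun a _ => ?_
    rw [Fintype.sum_prod_type]
    refine Finset.sum_congr rfl fun b _ => Finset.sum_congr rfl fun d _ =>
      Finset.sum_congr rfl fun c _ => ?_
    rw [pP_congr (F := fun ω => A ω = a ∧ B ω = b ∧ D ω = d ∧ C ω = c)
        (by intro ω; simp only [Prod.ext_iff]; try tauto),
      pP_congr (E := fun ω => (B ω, D ω) = (b, d) ∧ C ω = c)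
        (F := fun ω => B ω = b ∧ D ω = d ∧ C ω = c)
        (by intro ω; simp only [Prod.ext_iff]; try tauto)]
  have h1 : mi3 P A B C =
      ∑ a, ∑ b, ∑ d, ∑ c, p4 a b d c *
        Real.log (pabc a b c * pc c / (pac a c * pbc b c)) := by
    unfold mi3
    refine Finset.sum_congr rfl fun a _ => Finset.sum_congr rfl fun b _ => ?_
    have step : ∀ c : γ, pabc a b c *
        Real.log (pabc a b c * pc c / (pac a c * pbc b c)) =
        ∑ d, p4 a b d c *
          Real.log (pabc a b c * pc c / (pac a c * pbc b c)) := by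
      intro c
      rw [← Finset.sum_mul, ← hm]
    calc (∑ c, pabc a b c *
          Real.log (pabc a b c * pc c / (pac a c * pbc b c)))
        = ∑ c, ∑ d, p4 a b d c *
            Real.log (pabc a b c * pc c / (pac a c * pbc b c)) :=
          Finset.sum_congr rfl fun c _ => step c
      _ = _ := Finset.sum_comm
  have h2 : mi3 P A D (fun ω => (B ω, C ω)) =
      ∑ a, ∑ b, ∑ d, ∑ c, p4 a b d c *
        Real.log (p4 a b d c * pbc b c / (pabc a b c * pbdc b d c)) := by
    unfold mi3
    refine Finset.sum_congr rfl fun a _ => ?_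
    have step : ∀ d : δ, (∑ q : β × γ,
        pP P (fun ω => A ω = a ∧ D ω = d ∧ (B ω, C ω) = q) *
          Real.log (pP P (fun ω => A ω = a ∧ D ω = d ∧ (B ω, C ω) = q) *
              pP P (fun ω => (B ω, C ω) = q) /
            (pP P (fun ω => A ω = a ∧ (B ω, C ω) = q) *
              pP P (fun ω => D ω = d ∧ (B ω, C ω) = q)))) =
        ∑ b, ∑ c, p4 a b d c *
          Real.log (p4 a b d c * pbc b c / (pabc a b c * pbdc b d c)) := by
      intro d
      rw [Fintype.sum_prod_type]
      refine Finset.sum_congr rfl fun b _ => Finset.sum_congr rfl fun c _ => ?_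
      rw [pP_congr (E := fun ω => A ω = a ∧ D ω = d ∧ (B ω, C ω) = (b, c))
          (F := fun ω => A ω = a ∧ B ω = b ∧ D ω = d ∧ C ω = c)
          (by intro ω; simp only [Prod.ext_iff]; try tauto),
        pP_congr (E := fun ω => (B ω, C ω) = (b, c))
          (F := fun ω => B ω = b ∧ C ω = c)
          (by intro ω; simp only [Prod.ext_iff]; try tauto),
        pP_congr (E := fun ω => A ω = a ∧ (B ω, C ω) = (b, c))
          (F := fun ω => A ω = a ∧ B ω = b ∧ C ω = c)
          (by intro ω; simp only [Prod.ext_iff]; try tauto),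
        pP_congr (E := fun ω => D ω = d ∧ (B ω, C ω) = (b, c))
          (F := fun ω => B ω = b ∧ D ω = d ∧ C ω = c)
          (by intro ω; simp only [Prod.ext_iff]; try tauto)]
    calc (∑ d, ∑ q : β × γ,
          pP P (fun ω => A ω = a ∧ D ω = d ∧ (B ω, C ω) = q) *
            Real.log (pP P (fun ω => A ω = a ∧ D ω = d ∧ (B ω, C ω) = q) *
                pP P (fun ω => (B ω, C ω) = q) /
              (pP P (fun ω => A ω = a ∧ (B ω, C ω) = q) *
                pP P (fun ω => D ω = d ∧ (B ω, C ω) = q))))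
        = ∑ d, ∑ b, ∑ c, p4 a b d c *
            Real.log (p4 a b d c * pbc b c / (pabc a b c * pbdc b d c)) :=
          Finset.sum_congr rfl fun d _ => step d
      _ = _ := Finset.sum_comm
  rw [hL, h1, h2, ← Finset.sum_add_distrib]
  refine Finset.sum_congr rfl fun a _ => ?_
  rw [← Finset.sum_add_distrib]
  refine Finset.sum_congr rfl fun b _ => ?_
  rw [← Finset.sum_add_distrib]
  refine Finset.sum_congr rfl fun d _ => ?_
  rw [← Finset.sum_add_distrib]
  refine Finset.sum_congr rfl fun c _ => ?_
  refine log_split (pP_nonneg hP0 _) ?_ ?_ ?_ ?_ ?_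
  · exact pP_mono hP0 (by tauto)
  · exact pP_mono hP0 (by tauto)
  · exact pP_mono hP0 (by tauto)
  · exact pP_mono hP0 (by tauto)
  · exact pP_mono hP0 (by tauto)

lemma mi3_nonneg (hP0 : ∀ ω, 0 ≤ P ω) (hP1 : ∑ ω, P ω = 1) {α β γ : Type*}
    [Fintype α] [Fintype β] [Fintype γ] (A : Ω → α) (B : Ω → β) (C : Ω → γ) :
    0 ≤ mi3 P A B C := by
  set p : α → β → γ → ℝ := fun a b c =>
    pP P (fun ω => A ω = a ∧ B ω = b ∧ C ω = c) with hp
  set pac : α → γ → ℝ := fun a c => pP P (fun ω => A ω = a ∧ C ω = c) with hpac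
  set pbc : β → γ → ℝ := fun b c => pP P (fun ω => B ω = b ∧ C ω = c) with hpbc
  set pc : γ → ℝ := fun c => pP P (fun ω => C ω = c) with hpc
  set q : α → β → γ → ℝ := fun a b c =>
    if pc c = 0 then 0 else pac a c * pbc b c / pc c with hq
  have hsum_p : (∑ a, ∑ b, ∑ c, p a b c) = 1 := by
    have e1 : ∀ b c, (∑ a, p a b c) = pbc b c := fun b c =>
      pP_sum_fiber A (fun ω => B ω = b ∧ C ω = c)
    have e2 : ∀ c, (∑ b, pbc b c) = pc c := fun c =>
      pP_sum_fiber B (fun ω => C ω = c)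
    have e3 : (∑ c, pc c) = 1 := by
      calc (∑ c, pc c) = ∑ c, pP P (fun ω => C ω = c ∧ True) :=
            Finset.sum_congr rfl fun c _ => pP_congr (by tauto)
        _ = pP P (fun _ => True) := pP_sum_fiber C (fun _ => True)
        _ = 1 := by simpa [pP] using hP1
    rw [Finset.sum_comm]
    calc (∑ b, ∑ a, ∑ c, p a b c) = ∑ b, ∑ c, ∑ a, p a b c :=
          Finset.sum_congr rfl fun b _ => Finset.sum_comm
      _ = ∑ b, ∑ c, pbc b c := by
          refine Finset.sum_congr rfl fun b _ => Finset.sum_congr rfl fun c _ => e1 b c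
      _ = ∑ c, ∑ b, pbc b c := Finset.sum_comm
      _ = ∑ c, pc c := Finset.sum_congr rfl fun c _ => e2 c
      _ = 1 := e3
  have hsum_q : (∑ a, ∑ b, ∑ c, q a b c) = 1 := by
    have e1 : ∀ c : γ, (∑ a, pac a c) = pc c := fun c =>
      pP_sum_fiber A (fun ω => C ω = c)
    have e2 : ∀ c : γ, (∑ b, pbc b c) = pc c := fun c =>
      pP_sum_fiber B (fun ω => C ω = c)
    have e3 : (∑ c, pc c) = 1 := by
      calc (∑ c, pc c) = ∑ c, pP P (fun ω => C ω = c ∧ True) :=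
            Finset.sum_congr rfl fun c _ => pP_congr (by tauto)
        _ = pP P (fun _ => True) := pP_sum_fiber C (fun _ => True)
        _ = 1 := by simpa [pP] using hP1
    have key : ∀ c, (∑ a, ∑ b, q a b c) = pc c := by
      intro c
      by_cases hc : pc c = 0
      · simp [hq, hc]
      · have : (∑ a, ∑ b, q a b c) = (∑ a, pac a c * pc c / pc c) := by
          refine Finset.sum_congr rfl fun a _ => ?_
          rw [hq]
          simp only [hc, if_false]
          rw [← Finset.sum_div, ← Finset.mul_sum, e2 c]
        rw [this]
        have : (∑ a, pac a c * pc c / pc c) = ∑ a, pac a c := by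
          refine Finset.sum_congr rfl fun a _ => ?_
          field_simp
        rw [this, e1 c]
    calc (∑ a, ∑ b, ∑ c, q a b c) = ∑ a, ∑ c, ∑ b, q a b c :=
          Finset.sum_congr rfl fun a _ => Finset.sum_comm
      _ = ∑ c, ∑ a, ∑ b, q a b c := Finset.sum_comm
      _ = ∑ c, pc c := Finset.sum_congr rfl fun c _ => key c
      _ = 1 := e3
  have term_ge : ∀ a b c, p a b c - q a b c ≤
      p a b c * Real.log (p a b c * pc c / (pac a c * pbc b c)) := by
    intro a b c
    have hp0 : 0 ≤ p a b c := pP_nonneg hP0 _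
    rcases hp0.eq_or_lt with h0 | h0
    · have hq0 : 0 ≤ q a b c := by
        rw [hq]
        dsimp only
        split
        · exact le_refl 0
        · have h1 : 0 ≤ pac a c := pP_nonneg hP0 _
          have h2 : 0 ≤ pbc b c := pP_nonneg hP0 _
          have h3 : 0 ≤ pc c := pP_nonneg hP0 _
          positivity
      rw [← h0]
      simpa using hq0
    · have h1 : p a b c ≤ pac a c := pP_mono hP0 (by tauto)
      have h2 : p a b c ≤ pbc b c := pP_mono hP0 (by tauto)
      have h3 : pbc b c ≤ pc c := pP_mono hP0 (by tauto)
      have hac : 0 < pac a c := lt_of_lt_of_le h0 h1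
      have hbc : 0 < pbc b c := lt_of_lt_of_le h0 h2
      have hc : 0 < pc c := lt_of_lt_of_le hbc h3
      have hqv : q a b c = pac a c * pbc b c / pc c := by
        rw [hq]; simp [ne_of_gt hc]
      have hq0 : 0 < q a b c := by rw [hqv]; positivity
      have harg : p a b c * pc c / (pac a c * pbc b c) = p a b c / q a b c := by
        rw [hqv]; field_simp; try ring
      rw [harg]
      have hlog : Real.log (q a b c / p a b c) ≤ q a b c / p a b c - 1 :=
        Real.log_le_sub_one_of_pos (by positivity)
      have hlog2 : 1 - q a b c / p a b c ≤ Real.log (p a b c / q a b c) := by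
        rw [Real.log_div (ne_of_gt h0) (ne_of_gt hq0)]
        rw [Real.log_div (ne_of_gt hq0) (ne_of_gt h0)] at hlog
        linarith
      have := mul_le_mul_of_nonneg_left hlog2 (le_of_lt h0)
      calc p a b c - q a b c = p a b c * (1 - q a b c / p a b c) := by
            field_simp
        _ ≤ p a b c * Real.log (p a b c / q a b c) := this
  calc (0:ℝ) = 1 - 1 := by norm_num
    _ = (∑ a, ∑ b, ∑ c, p a b c) - (∑ a, ∑ b, ∑ c, q a b c) := by
        rw [hsum_p, hsum_q]
    _ = ∑ a, ∑ b, ∑ c, (p a b c - q a b c) := by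
        rw [← Finset.sum_sub_distrib]
        refine Finset.sum_congr rfl fun a _ => ?_
        rw [← Finset.sum_sub_distrib]
        refine Finset.sum_congr rfl fun b _ => ?_
        rw [← Finset.sum_sub_distrib]
    _ ≤ mi3 P A B C := by
        refine Finset.sum_le_sum fun a _ => Finset.sum_le_sum fun b _ =>
          Finset.sum_le_sum fun c _ => term_ge a b c

lemma mi3_vanish (hP0 : ∀ ω, 0 ≤ P ω) {α β γ : Type*}
    [Fintype α] [Fintype β] [Fintype γ] (A : Ω → α) (B : Ω → β) (C : Ω → γ)
    (h : ∀ a b c, pP P (fun ω => A ω = a ∧ B ω = b ∧ C ω = c) *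
        pP P (fun ω => C ω = c) =
      pP P (fun ω => A ω = a ∧ C ω = c) * pP P (fun ω => B ω = b ∧ C ω = c)) :
    mi3 P A B C = 0 := by
  unfold mi3
  refine Finset.sum_eq_zero fun a _ => Finset.sum_eq_zero fun b _ =>
    Finset.sum_eq_zero fun c _ => ?_
  set x := pP P (fun ω => A ω = a ∧ B ω = b ∧ C ω = c) with hx
  rcases (pP_nonneg hP0 (fun ω => A ω = a ∧ B ω = b ∧ C ω = c)).eq_or_lt with h0 | h0
  · rw [hx, ← h0]; simp
  · have h1 : x ≤ pP P (fun ω => A ω = a ∧ C ω = c) := pP_mono hP0 (by tauto)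
    have h2 : x ≤ pP P (fun ω => B ω = b ∧ C ω = c) := pP_mono hP0 (by tauto)
    have hac : 0 < pP P (fun ω => A ω = a ∧ C ω = c) := lt_of_lt_of_le h0 h1
    have hbc : 0 < pP P (fun ω => B ω = b ∧ C ω = c) := lt_of_lt_of_le h0 h2
    have harg : x * pP P (fun ω => C ω = c) /
        (pP P (fun ω => A ω = a ∧ C ω = c) * pP P (fun ω => B ω = b ∧ C ω = c)) = 1 := by
      rw [hx, h a b c]
      field_simp
    rw [harg, Real.log_one, mul_zero]

lemma mi3_swapB {α β γ δ : Type*} [Fintype α] [Fintype β] [Fintype γ] [Fintype δ]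
    (A : Ω → α) (B : Ω → β) (D : Ω → δ) (C : Ω → γ) :
    mi3 P A (fun ω => (B ω, D ω)) C = mi3 P A (fun ω => (D ω, B ω)) C := by
  unfold mi3
  refine Finset.sum_congr rfl fun a _ => ?_
  refine Fintype.sum_equiv (Equiv.prodComm β δ) _ _ fun bd => ?_
  obtain ⟨b, d⟩ := bd
  refine Finset.sum_congr rfl fun c _ => ?_
  rw [pP_congr (E := fun ω => A ω = a ∧ (B ω, D ω) = (b, d) ∧ C ω = c)
      (F := fun ω => A ω = a ∧ (D ω, B ω) = (d, b) ∧ C ω = c)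
      (by intro ω; simp only [Prod.ext_iff]; try tauto),
    pP_congr (E := fun ω => (B ω, D ω) = (b, d) ∧ C ω = c)
      (F := fun ω => (D ω, B ω) = (d, b) ∧ C ω = c)
      (by intro ω; simp only [Prod.ext_iff]; try tauto)]
  rfl

lemma fact1 {𝒳 𝒴 𝒵 𝒰 : Type*} [Fintype 𝒳]
    (X : Ω → 𝒳) (Y : Ω → 𝒴) (Z : Ω → 𝒵) (U : Ω → 𝒰)
    (hP0 : ∀ ω, 0 ≤ P ω)
    (h : ∀ u y x z,
      pP P (fun ω => U ω = u ∧ Y ω = y ∧ (X ω, Z ω) = (x, z)) *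
        pP P (fun ω => Y ω = y) =
      pP P (fun ω => U ω = u ∧ Y ω = y) *
        pP P (fun ω => Y ω = y ∧ (X ω, Z ω) = (x, z))) :
    ∀ x u y z,
      pP P (fun ω => X ω = x ∧ U ω = u ∧ Y ω = y ∧ Z ω = z) *
        pP P (fun ω => Y ω = y ∧ Z ω = z) =
      pP P (fun ω => X ω = x ∧ Y ω = y ∧ Z ω = z) *
        pP P (fun ω => U ω = u ∧ Y ω = y ∧ Z ω = z) := by
  have h' : ∀ u y x z,
      pP P (fun ω => U ω = u ∧ Y ω = y ∧ X ω = x ∧ Z ω = z) *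
        pP P (fun ω => Y ω = y) =
      pP P (fun ω => U ω = u ∧ Y ω = y) *
        pP P (fun ω => Y ω = y ∧ X ω = x ∧ Z ω = z) := by
    intro u y x z
    have := h u y x z
    rwa [pP_congr (E := fun ω => U ω = u ∧ Y ω = y ∧ (X ω, Z ω) = (x, z))
        (F := fun ω => U ω = u ∧ Y ω = y ∧ X ω = x ∧ Z ω = z)
        (by intro ω; simp only [Prod.ext_iff]; try tauto),
      pP_congr (E := fun ω => Y ω = y ∧ (X ω, Z ω) = (x, z))
        (F := fun ω => Y ω = y ∧ X ω = x ∧ Z ω = z)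
        (by intro ω; simp only [Prod.ext_iff]; try tauto)] at this
  intro x u y z
  by_cases hy : pP P (fun ω => Y ω = y) = 0
  · rw [pP_eq_zero hP0 (E := fun ω => X ω = x ∧ U ω = u ∧ Y ω = y ∧ Z ω = z)
        (by tauto) hy,
      pP_eq_zero hP0 (E := fun ω => U ω = u ∧ Y ω = y ∧ Z ω = z) (by tauto) hy]
    ring
  · have m1 : pP P (fun ω => U ω = u ∧ Y ω = y ∧ Z ω = z) =
        ∑ x', pP P (fun ω => U ω = u ∧ Y ω = y ∧ X ω = x' ∧ Z ω = z) := by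
      rw [← pP_sum_fiber X (fun ω => U ω = u ∧ Y ω = y ∧ Z ω = z)]
      exact Finset.sum_congr rfl fun x' _ => pP_congr (by tauto)
    have m2 : pP P (fun ω => Y ω = y ∧ Z ω = z) =
        ∑ x', pP P (fun ω => Y ω = y ∧ X ω = x' ∧ Z ω = z) := by
      rw [← pP_sum_fiber X (fun ω => Y ω = y ∧ Z ω = z)]
      exact Finset.sum_congr rfl fun x' _ => pP_congr (by tauto)
    have huyz : pP P (fun ω => U ω = u ∧ Y ω = y ∧ Z ω = z) *
        pP P (fun ω => Y ω = y) =
        pP P (fun ω => U ω = u ∧ Y ω = y) * pP P (fun ω => Y ω = y ∧ Z ω = z) := by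
      rw [m1, m2, Finset.sum_mul, Finset.mul_sum]
      exact Finset.sum_congr rfl fun x' _ => h' u y x' z
    have h5 := h' u y x z
    rw [pP_congr (E := fun ω => X ω = x ∧ U ω = u ∧ Y ω = y ∧ Z ω = z)
        (F := fun ω => U ω = u ∧ Y ω = y ∧ X ω = x ∧ Z ω = z) (by tauto),
      pP_congr (E := fun ω => X ω = x ∧ Y ω = y ∧ Z ω = z)
        (F := fun ω => Y ω = y ∧ X ω = x ∧ Z ω = z) (by tauto)]
    apply mul_right_cancel₀ hy
    linear_combination pP P (fun ω => Y ω = y ∧ Z ω = z) * h5 -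
      pP P (fun ω => Y ω = y ∧ X ω = x ∧ Z ω = z) * huyz

lemma fact2 {𝒳 𝒴 𝒵 𝒰 𝒲 : Type*} [Fintype 𝒴]
    (X : Ω → 𝒳) (Y : Ω → 𝒴) (Z : Ω → 𝒵) (U : Ω → 𝒰) (W : Ω → 𝒲)
    (hP0 : ∀ ω, 0 ≤ P ω)
    (h : ∀ w u x y z,
      pP P (fun ω => W ω = w ∧ (U ω, X ω) = (u, x) ∧ (Y ω, Z ω) = (y, z)) *
        pP P (fun ω => (U ω, X ω) = (u, x)) =
      pP P (fun ω => W ω = w ∧ (U ω, X ω) = (u, x)) *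
        pP P (fun ω => (U ω, X ω) = (u, x) ∧ (Y ω, Z ω) = (y, z))) :
    ∀ y w x u z,
      pP P (fun ω => Y ω = y ∧ W ω = w ∧ X ω = x ∧ U ω = u ∧ Z ω = z) *
        pP P (fun ω => X ω = x ∧ U ω = u ∧ Z ω = z) =
      pP P (fun ω => Y ω = y ∧ X ω = x ∧ U ω = u ∧ Z ω = z) *
        pP P (fun ω => W ω = w ∧ X ω = x ∧ U ω = u ∧ Z ω = z) := by
  have h' : ∀ w u x y z,
      pP P (fun ω => W ω = w ∧ U ω = u ∧ X ω = x ∧ Y ω = y ∧ Z ω = z) *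
        pP P (fun ω => U ω = u ∧ X ω = x) =
      pP P (fun ω => W ω = w ∧ U ω = u ∧ X ω = x) *
        pP P (fun ω => U ω = u ∧ X ω = x ∧ Y ω = y ∧ Z ω = z) := by
    intro w u x y z
    have := h w u x y z
    rwa [pP_congr (E := fun ω => W ω = w ∧ (U ω, X ω) = (u, x) ∧ (Y ω, Z ω) = (y, z))
        (F := fun ω => W ω = w ∧ U ω = u ∧ X ω = x ∧ Y ω = y ∧ Z ω = z)
        (by intro ω; simp only [Prod.ext_iff]; try tauto),
      pP_congr (E := fun ω => (U ω, X ω) = (u, x))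
        (F := fun ω => U ω = u ∧ X ω = x)
        (by intro ω; simp only [Prod.ext_iff]; try tauto),
      pP_congr (E := fun ω => W ω = w ∧ (U ω, X ω) = (u, x))
        (F := fun ω => W ω = w ∧ U ω = u ∧ X ω = x)
        (by intro ω; simp only [Prod.ext_iff]; try tauto),
      pP_congr (E := fun ω => (U ω, X ω) = (u, x) ∧ (Y ω, Z ω) = (y, z))
        (F := fun ω => U ω = u ∧ X ω = x ∧ Y ω = y ∧ Z ω = z)
        (by intro ω; simp only [Prod.ext_iff]; try tauto)] at this
  intro y w x u z
  by_cases hux : pP P (fun ω => U ω = u ∧ X ω = x) = 0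
  · rw [pP_eq_zero hP0
        (E := fun ω => Y ω = y ∧ W ω = w ∧ X ω = x ∧ U ω = u ∧ Z ω = z)
        (by tauto) hux,
      pP_eq_zero hP0 (E := fun ω => Y ω = y ∧ X ω = x ∧ U ω = u ∧ Z ω = z)
        (by tauto) hux]
    ring
  · have m1 : pP P (fun ω => W ω = w ∧ U ω = u ∧ X ω = x ∧ Z ω = z) =
        ∑ y', pP P (fun ω => W ω = w ∧ U ω = u ∧ X ω = x ∧ Y ω = y' ∧ Z ω = z) := by
      rw [← pP_sum_fiber Y (fun ω => W ω = w ∧ U ω = u ∧ X ω = x ∧ Z ω = z)]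
      exact Finset.sum_congr rfl fun y' _ => pP_congr (by tauto)
    have m2 : pP P (fun ω => U ω = u ∧ X ω = x ∧ Z ω = z) =
        ∑ y', pP P (fun ω => U ω = u ∧ X ω = x ∧ Y ω = y' ∧ Z ω = z) := by
      rw [← pP_sum_fiber Y (fun ω => U ω = u ∧ X ω = x ∧ Z ω = z)]
      exact Finset.sum_congr rfl fun y' _ => pP_congr (by tauto)
    have hz : pP P (fun ω => W ω = w ∧ U ω = u ∧ X ω = x ∧ Z ω = z) *
        pP P (fun ω => U ω = u ∧ X ω = x) =
        pP P (fun ω => W ω = w ∧ U ω = u ∧ X ω = x) *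
          pP P (fun ω => U ω = u ∧ X ω = x ∧ Z ω = z) := by
      rw [m1, m2, Finset.sum_mul, Finset.mul_sum]
      exact Finset.sum_congr rfl fun y' _ => h' w u x y' z
    have h5 := h' w u x y z
    rw [pP_congr
        (E := fun ω => Y ω = y ∧ W ω = w ∧ X ω = x ∧ U ω = u ∧ Z ω = z)
        (F := fun ω => W ω = w ∧ U ω = u ∧ X ω = x ∧ Y ω = y ∧ Z ω = z) (by tauto),
      pP_congr (E := fun ω => X ω = x ∧ U ω = u ∧ Z ω = z)
        (F := fun ω => U ω = u ∧ X ω = x ∧ Z ω = z) (by tauto),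
      pP_congr (E := fun ω => Y ω = y ∧ X ω = x ∧ U ω = u ∧ Z ω = z)
        (F := fun ω => U ω = u ∧ X ω = x ∧ Y ω = y ∧ Z ω = z) (by tauto),
      pP_congr (E := fun ω => W ω = w ∧ X ω = x ∧ U ω = u ∧ Z ω = z)
        (F := fun ω => W ω = w ∧ U ω = u ∧ X ω = x ∧ Z ω = z) (by tauto)]
    apply mul_right_cancel₀ hux
    linear_combination pP P (fun ω => U ω = u ∧ X ω = x ∧ Z ω = z) * h5 -
      pP P (fun ω => U ω = u ∧ X ω = x ∧ Y ω = y ∧ Z ω = z) * hz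

end aux

lemma sum_ite_irrel {Ω : Type*} [Fintype Ω] (P : Ω → ℝ) {E F : Ω → Prop}
    {i1 : ∀ ω, Decidable (E ω)} {i2 : ∀ ω, Decidable (F ω)}
    (hEF : ∀ ω, E ω ↔ F ω) :
    (∑ ω, @ite ℝ (E ω) (i1 ω) (P ω) 0) = ∑ ω, @ite ℝ (F ω) (i2 ω) (P ω) 0 := by
  refine Finset.sum_congr rfl fun ω _ => ?_
  by_cases h : E ω
  · simp only [h, if_true, (hEF ω).mp h]
  · have h2 : ¬ F ω := fun hf => h ((hEF ω).mpr hf)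
    simp only [h, h2, if_false]

lemma condMI_eq_mi3 {Ω α β γ : Type*} [Fintype Ω] [Fintype α] [Fintype β] [Fintype γ]
    (P : Ω → ℝ) (A : Ω → α) (B : Ω → β) (C : Ω → γ) :
    condMI P A B C = mi3 P A B C := by
  unfold condMI mi3
  refine Finset.sum_congr rfl fun a _ => Finset.sum_congr rfl fun b _ =>
    Finset.sum_congr rfl fun c _ => ?_
  exact congrArg₂ (fun r s : ℝ => r * s) (sum_ite_irrel P fun ω => Iff.rfl)
    (congrArg Real.log (congrArg₂ (fun r s : ℝ => r / s)
      (congrArg₂ (fun r s : ℝ => r * s) (sum_ite_irrel P fun ω => Iff.rfl)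
        (sum_ite_irrel P fun ω => Iff.rfl))
      (congrArg₂ (fun r s : ℝ => r * s) (sum_ite_irrel P fun ω => Iff.rfl)
        (sum_ite_irrel P fun ω => Iff.rfl))))

theorem main_general {Ω 𝒳 𝒴 𝒵 𝒰 𝒲 : Type*} [Fintype Ω]
    [Fintype 𝒳] [Fintype 𝒴] [Fintype 𝒵] [Fintype 𝒰] [Fintype 𝒲]
    (P : Ω → ℝ) (hP0 : ∀ ω, 0 ≤ P ω) (hP1 : ∑ ω, P ω = 1)
    (X : Ω → 𝒳) (Y : Ω → 𝒴) (Z : Ω → 𝒵) (U : Ω → 𝒰) (W : Ω → 𝒲)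
    (hU : CondIndepPmf P U Y (fun ω => (X ω, Z ω)))
    (hW : CondIndepPmf P W (fun ω => (U ω, X ω)) (fun ω => (Y ω, Z ω))) :
    condMI P X W (fun ω => (U ω, Z ω)) + condMI P Y U Z =
      condMI P (fun ω => (X ω, Y ω)) (fun ω => (W ω, U ω)) Z ∧
    condMI P X W (fun ω => (U ω, Z ω)) + condMI P Y U Z ≥ condMI P X W Z := by
  have hU2 : ∀ u y x z,
      pP P (fun ω => U ω = u ∧ Y ω = y ∧ (X ω, Z ω) = (x, z)) *
        pP P (fun ω => Y ω = y) =
      pP P (fun ω => U ω = u ∧ Y ω = y) *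
        pP P (fun ω => Y ω = y ∧ (X ω, Z ω) = (x, z)) := by
    intro u y x z
    have h := hU u y (x, z)
    exact (congrArg₂ (fun r s : ℝ => r * s) (sum_ite_irrel P fun ω => Iff.rfl)
        (sum_ite_irrel P fun ω => Iff.rfl)).trans
      (h.trans (congrArg₂ (fun r s : ℝ => r * s) (sum_ite_irrel P fun ω => Iff.rfl)
        (sum_ite_irrel P fun ω => Iff.rfl)))
  have hW2 : ∀ w u x y z,
      pP P (fun ω => W ω = w ∧ (U ω, X ω) = (u, x) ∧ (Y ω, Z ω) = (y, z)) *
        pP P (fun ω => (U ω, X ω) = (u, x)) =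
      pP P (fun ω => W ω = w ∧ (U ω, X ω) = (u, x)) *
        pP P (fun ω => (U ω, X ω) = (u, x) ∧ (Y ω, Z ω) = (y, z)) := by
    intro w u x y z
    have h := hW w (u, x) (y, z)
    exact (congrArg₂ (fun r s : ℝ => r * s) (sum_ite_irrel P fun ω => Iff.rfl)
        (sum_ite_irrel P fun ω => Iff.rfl)).trans
      (h.trans (congrArg₂ (fun r s : ℝ => r * s) (sum_ite_irrel P fun ω => Iff.rfl)
        (sum_ite_irrel P fun ω => Iff.rfl)))
  have f1 := fact1 (P := P) X Y Z U hP0 hU2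
  have f2 := fact2 (P := P) X Y Z U W hP0 hW2
  have ciXU : mi3 P X U (fun ω => (Y ω, Z ω)) = 0 := by
    refine mi3_vanish hP0 _ _ _ ?_
    rintro a b ⟨y, z⟩
    rw [pP_congr (E := fun ω => X ω = a ∧ U ω = b ∧ (Y ω, Z ω) = (y, z))
        (F := fun ω => X ω = a ∧ U ω = b ∧ Y ω = y ∧ Z ω = z)
        (by intro ω; simp only [Prod.ext_iff]; try tauto),
      pP_congr (E := fun ω => (Y ω, Z ω) = (y, z))
        (F := fun ω => Y ω = y ∧ Z ω = z)
        (by intro ω; simp only [Prod.ext_iff]; try tauto),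
      pP_congr (E := fun ω => X ω = a ∧ (Y ω, Z ω) = (y, z))
        (F := fun ω => X ω = a ∧ Y ω = y ∧ Z ω = z)
        (by intro ω; simp only [Prod.ext_iff]; try tauto),
      pP_congr (E := fun ω => U ω = b ∧ (Y ω, Z ω) = (y, z))
        (F := fun ω => U ω = b ∧ Y ω = y ∧ Z ω = z)
        (by intro ω; simp only [Prod.ext_iff]; try tauto)]
    exact f1 a b y z
  have ciYW : mi3 P Y W (fun ω => (X ω, (U ω, Z ω))) = 0 := by
    refine mi3_vanish hP0 _ _ _ ?_
    rintro a b ⟨x, u, z⟩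
    rw [pP_congr (E := fun ω => Y ω = a ∧ W ω = b ∧ (X ω, (U ω, Z ω)) = (x, u, z))
        (F := fun ω => Y ω = a ∧ W ω = b ∧ X ω = x ∧ U ω = u ∧ Z ω = z)
        (by intro ω; simp only [Prod.ext_iff]; try tauto),
      pP_congr (E := fun ω => (X ω, (U ω, Z ω)) = (x, u, z))
        (F := fun ω => X ω = x ∧ U ω = u ∧ Z ω = z)
        (by intro ω; simp only [Prod.ext_iff]; try tauto),
      pP_congr (E := fun ω => Y ω = a ∧ (X ω, (U ω, Z ω)) = (x, u, z))
        (F := fun ω => Y ω = a ∧ X ω = x ∧ U ω = u ∧ Z ω = z)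
        (by intro ω; simp only [Prod.ext_iff]; try tauto),
      pP_congr (E := fun ω => W ω = b ∧ (X ω, (U ω, Z ω)) = (x, u, z))
        (F := fun ω => W ω = b ∧ X ω = x ∧ U ω = u ∧ Z ω = z)
        (by intro ω; simp only [Prod.ext_iff]; try tauto)]
    exact f2 a b x u z
  -- identify condMI with mi3
  have eG1 : condMI P X W (fun ω => (U ω, Z ω)) = mi3 P X W (fun ω => (U ω, Z ω)) :=
    condMI_eq_mi3 P X W _
  have eG2 : condMI P Y U Z = mi3 P Y U Z := condMI_eq_mi3 P Y U Z
  have eG3 : condMI P (fun ω => (X ω, Y ω)) (fun ω => (W ω, U ω)) Z =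
      mi3 P (fun ω => (X ω, Y ω)) (fun ω => (W ω, U ω)) Z := condMI_eq_mi3 P _ _ Z
  have eG4 : condMI P X W Z = mi3 P X W Z := condMI_eq_mi3 P X W Z
  have key : mi3 P (fun ω => (X ω, Y ω)) (fun ω => (W ω, U ω)) Z =
      mi3 P X W (fun ω => (U ω, Z ω)) + mi3 P Y U Z := by
    calc mi3 P (fun ω => (X ω, Y ω)) (fun ω => (W ω, U ω)) Z
        = mi3 P (fun ω => (X ω, Y ω)) (fun ω => (U ω, W ω)) Z :=
          mi3_swapB _ W U Z
      _ = mi3 P (fun ω => (X ω, Y ω)) U Z +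
            mi3 P (fun ω => (X ω, Y ω)) W (fun ω => (U ω, Z ω)) :=
          mi3_chain hP0 _ U W Z
      _ = mi3 P Y U Z + mi3 P X W (fun ω => (U ω, Z ω)) := by
          have t1 : mi3 P (fun ω => (X ω, Y ω)) U Z = mi3 P Y U Z := by
            calc mi3 P (fun ω => (X ω, Y ω)) U Z
                = mi3 P U (fun ω => (X ω, Y ω)) Z := mi3_symm _ _ _
              _ = mi3 P U (fun ω => (Y ω, X ω)) Z := mi3_swapB U X Y Z
              _ = mi3 P U Y Z + mi3 P U X (fun ω => (Y ω, Z ω)) :=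
                  mi3_chain hP0 U Y X Z
              _ = mi3 P Y U Z + mi3 P X U (fun ω => (Y ω, Z ω)) := by
                  rw [mi3_symm U Y Z, mi3_symm U X (fun ω => (Y ω, Z ω))]
              _ = mi3 P Y U Z := by rw [ciXU, add_zero]
          have t2 : mi3 P (fun ω => (X ω, Y ω)) W (fun ω => (U ω, Z ω)) =
              mi3 P X W (fun ω => (U ω, Z ω)) := by
            calc mi3 P (fun ω => (X ω, Y ω)) W (fun ω => (U ω, Z ω))
                = mi3 P W (fun ω => (X ω, Y ω)) (fun ω => (U ω, Z ω)) :=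
                  mi3_symm _ _ _
              _ = mi3 P W X (fun ω => (U ω, Z ω)) +
                    mi3 P W Y (fun ω => (X ω, (U ω, Z ω))) :=
                  mi3_chain hP0 W X Y _
              _ = mi3 P X W (fun ω => (U ω, Z ω)) := by
                  rw [mi3_symm W X, mi3_symm W Y, ciYW, add_zero]
          rw [t1, t2]
      _ = mi3 P X W (fun ω => (U ω, Z ω)) + mi3 P Y U Z := by ring
  constructor
  · rw [eG1, eG2, eG3, key]
  · rw [eG1, eG2, eG4, ← key]
    calc mi3 P (fun ω => (X ω, Y ω)) (fun ω => (W ω, U ω)) Z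
        = mi3 P (fun ω => (W ω, U ω)) (fun ω => (X ω, Y ω)) Z := mi3_symm _ _ _
      _ = mi3 P (fun ω => (W ω, U ω)) X Z +
            mi3 P (fun ω => (W ω, U ω)) Y (fun ω => (X ω, Z ω)) :=
          mi3_chain hP0 _ X Y Z
      _ ≥ mi3 P (fun ω => (W ω, U ω)) X Z := by
          have := mi3_nonneg hP0 hP1 (P := P) (fun ω => (W ω, U ω)) Y
            (fun ω => (X ω, Z ω))
          linarith
      _ = mi3 P X (fun ω => (W ω, U ω)) Z := mi3_symm _ _ _
      _ = mi3 P X W Z + mi3 P X U (fun ω => (W ω, Z ω)) := mi3_chain hP0 X W U Z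
      _ ≥ mi3 P X W Z := by
          have := mi3_nonneg hP0 hP1 (P := P) X U (fun ω => (W ω, Z ω))
          linarith

/-- If `U` is conditionally independent of `(X,Z)` given `Y`, and `W`
is conditionally independent of `(Y,Z)` given `(U,X)`, then
`I(X;W|U,Z) + I(Y;U|Z) = I(X,Y;W,U|Z)`, and consequently
`I(X;W|U,Z) + I(Y;U|Z) ≥ I(X;W|Z)`. -/
theorem condMI_chain_identity
    {𝒳 𝒴 𝒵 𝒰 𝒲 : Type*}
    [Fintype 𝒳] [Fintype 𝒴] [Fintype 𝒵] [Fintype 𝒰] [Fintype 𝒲]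
    (P : 𝒳 × 𝒴 × 𝒵 × 𝒰 × 𝒲 → ℝ)
    (hP0 : ∀ ω, 0 ≤ P ω) (hP1 : ∑ ω, P ω = 1)
    -- `U ⫫ (X,Z) | Y` :
    (hU : CondIndepPmf P (fun ω => ω.2.2.2.1) (fun ω => ω.2.1)
      (fun ω => (ω.1, ω.2.2.1)))
    -- `W ⫫ (Y,Z) | (U,X)` :
    (hW : CondIndepPmf P (fun ω => ω.2.2.2.2) (fun ω => (ω.2.2.2.1, ω.1))
      (fun ω => (ω.2.1, ω.2.2.1))) :
    condMI P (fun ω => ω.1) (fun ω => ω.2.2.2.2) (fun ω => (ω.2.2.2.1, ω.2.2.1)) +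
        condMI P (fun ω => ω.2.1) (fun ω => ω.2.2.2.1) (fun ω => ω.2.2.1) =
      condMI P (fun ω => (ω.1, ω.2.1)) (fun ω => (ω.2.2.2.2, ω.2.2.2.1))
        (fun ω => ω.2.2.1) ∧
    condMI P (fun ω => ω.1) (fun ω => ω.2.2.2.2) (fun ω => (ω.2.2.2.1, ω.2.2.1)) +
        condMI P (fun ω => ω.2.1) (fun ω => ω.2.2.2.1) (fun ω => ω.2.2.1) ≥
      condMI P (fun ω => ω.1) (fun ω => ω.2.2.2.2) (fun ω => ω.2.2.1) := by
  exact main_general P hP0 hP1 (fun ω => ω.1) (fun ω => ω.2.1) (fun ω => ω.2.2.1)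
    (fun ω => ω.2.2.2.1) (fun ω => ω.2.2.2.2) hU hW
end

section
/- Let X, T, Z, Y be random variables taking values in finite alphabets such that Z and Y are conditionally independent given the pair (X,T). Then there exists a probability space carrying random variables (X', T', Z', Y') with the same joint distribution as (X, T, Z, Y), a random variable W uniformly distributed on the interval [0,1] that is independent of the triple (X', T', Z'), and a measurable function φ such that Y' = φ(X', T', W) almost surely. -/
/-!
Put `(X', T', Z')` on one uniform coordinate and `W` on an independent second one, and let
`Y' = f (X', T') W`, where `f (x, t)` pushes the uniform law forward to the conditional law of `Y`
given `(X, T) = (x, t)` (inverse-transform sampling). Then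
`P(X' = x, T' = t, Z' = z, Y' = y) = P(X = x, T = t, Z = z) · P(Y = y | X = x, T = t)`,
and conditional independence of `Z` and `Y` given `(X, T)` says precisely that this is
`P(X = x, T = t, Z = z, Y = y)`.
-/

open MeasureTheory ProbabilityTheory

namespace ProbabilityTheory

variable {Ω : Type*} [MeasurableSpace Ω] {μ : Measure Ω}

lemma measure_inter_mul_cond_eq_of_condIndep [IsFiniteMeasure μ] {A B C : Set Ω}
    (hC : MeasurableSet C) (hABC : μ (A ∩ (B ∩ C)) * μ C = μ (A ∩ C) * μ (B ∩ C)) :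
    μ (A ∩ C) * μ[B | C] = μ (A ∩ (B ∩ C)) := by
  rw [cond_apply hC, Set.inter_comm C B]
  by_cases h0 : μ C = 0
  · rw [measure_mono_null Set.inter_subset_right h0,
      measure_mono_null (Set.inter_subset_right.trans Set.inter_subset_right) h0, zero_mul]
  · calc μ (A ∩ C) * ((μ C)⁻¹ * μ (B ∩ C)) = μ (A ∩ (B ∩ C)) * μ C * (μ C)⁻¹ := by
          rw [hABC]; ring
      _ = μ (A ∩ (B ∩ C)) := by
          rw [mul_assoc, ENNReal.mul_inv_cancel h0 (measure_ne_top μ C), mul_one]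

variable {κ δ : Type*} [MeasurableSpace κ] [MeasurableSingletonClass κ]
  [MeasurableSpace δ] [StandardBorelSpace δ] [Nonempty δ] [IsFiniteMeasure μ]
  {V : Ω → κ} {Y : Ω → δ}

lemma condDistrib_apply_eq_cond (hV : Measurable V) (hY : Measurable Y) {v : κ}
    (hv : μ (V ⁻¹' {v}) ≠ 0) {s : Set δ} (hs : MeasurableSet s) :
    condDistrib Y V μ v s = μ[Y ⁻¹' s | V ⁻¹' {v}] := by
  rw [condDistrib_apply_of_ne_zero hY v (by rwa [Measure.map_apply hV (measurableSet_singleton v)]),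
    Measure.map_apply hV (measurableSet_singleton v),
    Measure.map_apply (hV.prodMk hY) ((measurableSet_singleton v).prod hs),
    cond_apply (hV (measurableSet_singleton v))]
  rfl

variable {α β γ : Type*} [MeasurableSpace α] [MeasurableSingletonClass α]
  [MeasurableSpace β] [MeasurableSingletonClass β] [MeasurableSpace γ] [MeasurableSingletonClass γ]
  {X : Ω → α} {T : Ω → β} {Z : Ω → γ}

lemma map_singleton_mul_condDistrib_of_condIndep (hX : Measurable X) (hT : Measurable T)
    (hZ : Measurable Z) (hY : Measurable Y) {x : α} {t : β} {z : γ} {y : δ}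
    (hCI : μ {ω | Z ω = z ∧ Y ω = y ∧ X ω = x ∧ T ω = t} * μ {ω | X ω = x ∧ T ω = t} =
      μ {ω | Z ω = z ∧ X ω = x ∧ T ω = t} * μ {ω | Y ω = y ∧ X ω = x ∧ T ω = t}) :
    μ.map (fun ω ↦ (X ω, T ω, Z ω)) {(x, t, z)} *
        condDistrib Y (fun ω ↦ (X ω, T ω)) μ (x, t) {y} =
      μ.map (fun ω ↦ (X ω, T ω, Z ω, Y ω)) {(x, t, z, y)} := by
  set C := {ω | X ω = x ∧ T ω = t}
  have hC : MeasurableSet C := (hX (measurableSet_singleton x)).inter (hT (measurableSet_singleton t))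
  have hXT : (fun ω ↦ (X ω, T ω)) ⁻¹' {(x, t)} = C := by ext; simp [C]
  have hXTZ : (fun ω ↦ (X ω, T ω, Z ω)) ⁻¹' {(x, t, z)} = Z ⁻¹' {z} ∩ C := by
    ext; simp [C]; tauto
  have hXTZY : (fun ω ↦ (X ω, T ω, Z ω, Y ω)) ⁻¹' {(x, t, z, y)} =
      Z ⁻¹' {z} ∩ (Y ⁻¹' {y} ∩ C) := by
    ext; simp [C]; tauto
  rw [Measure.map_apply (by fun_prop) (measurableSet_singleton _),
    Measure.map_apply (by fun_prop) (measurableSet_singleton _), hXTZ, hXTZY]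
  by_cases h0 : μ C = 0
  · rw [measure_mono_null Set.inter_subset_right h0,
      measure_mono_null (Set.inter_subset_right.trans Set.inter_subset_right) h0, zero_mul]
  · rw [condDistrib_apply_eq_cond (hX.prodMk hT) hY (hXT ▸ h0) (measurableSet_singleton y), hXT]
    exact measure_inter_mul_cond_eq_of_condIndep hC hCI

end ProbabilityTheory

open unitInterval

/-- Let `X, T, Z, Y` be random variables on a probability space taking
values in finite alphabets, with `Z` and `Y` conditionally independent given `(X, T)`.
Then there is a probability space carrying `(X', T', Z', Y')` with the same joint
distribution as `(X, T, Z, Y)`, a random variable `W` uniform on `[0,1]` and independent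
of `(X', T', Z')`, and a measurable function `φ` with `Y' = φ(X', T', W)` a.s. -/
theorem functional_representation_uniform
    {Ω : Type*} [MeasurableSpace Ω] (μ : Measure Ω) [IsProbabilityMeasure μ]
    {α β γ δ : Type*}
    [Fintype α] [MeasurableSpace α] [MeasurableSingletonClass α]
    [Fintype β] [MeasurableSpace β] [MeasurableSingletonClass β]
    [Fintype γ] [MeasurableSpace γ] [MeasurableSingletonClass γ]
    [Fintype δ] [MeasurableSpace δ] [MeasurableSingletonClass δ]
    (X : Ω → α) (T : Ω → β) (Z : Ω → γ) (Y : Ω → δ)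
    (hX : Measurable X) (hT : Measurable T) (hZ : Measurable Z) (hY : Measurable Y)
    -- `Z ⫫ Y | (X,T)` :
    (hCI : ∀ (z : γ) (y : δ) (x : α) (t : β),
      μ {ω | Z ω = z ∧ Y ω = y ∧ X ω = x ∧ T ω = t} * μ {ω | X ω = x ∧ T ω = t} =
        μ {ω | Z ω = z ∧ X ω = x ∧ T ω = t} * μ {ω | Y ω = y ∧ X ω = x ∧ T ω = t}) :
    ∃ (Ω' : Type) (_ : MeasurableSpace Ω') (μ' : Measure Ω'),
      IsProbabilityMeasure μ' ∧
      ∃ (X' : Ω' → α) (T' : Ω' → β) (Z' : Ω' → γ) (Y' : Ω' → δ) (W : Ω' → ℝ),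
        Measurable X' ∧ Measurable T' ∧ Measurable Z' ∧ Measurable Y' ∧ Measurable W ∧
        -- same joint distribution:
        μ'.map (fun ω => (X' ω, T' ω, Z' ω, Y' ω)) =
          μ.map (fun ω => (X ω, T ω, Z ω, Y ω)) ∧
        -- `W` is uniform on `[0,1]`:
        μ'.map W = volume.restrict (Set.Icc (0 : ℝ) 1) ∧
        -- `W` is independent of `(X', T', Z')`:
        IndepFun W (fun ω => (X' ω, T' ω, Z' ω)) μ' ∧
        -- functional representation:
        ∃ φ : α × β × ℝ → δ, Measurable φ ∧
          ∀ᵐ ω ∂μ', Y' ω = φ (X' ω, T' ω, W ω) := by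
  obtain ⟨ω⟩ := nonempty_of_isProbabilityMeasure μ
  have : Nonempty δ := ⟨Y ω⟩
  have : Nonempty (α × β × γ) := ⟨(X ω, T ω, Z ω)⟩
  have : IsProbabilityMeasure (μ.map fun ω ↦ (X ω, T ω, Z ω)) :=
    Measure.isProbabilityMeasure_map (by fun_prop)
  obtain ⟨ξ, hξ, hξ_law⟩ := (μ.map fun ω ↦ (X ω, T ω, Z ω)).exists_measurable_map_eq
  obtain ⟨f, hf, hf_law⟩ :=
    (condDistrib Y (fun ω ↦ (X ω, T ω)) μ).exists_measurable_map_eq_unitInterval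
  refine ⟨I × I, inferInstance, (volume : Measure I).prod volume, inferInstance,
    fun p ↦ (ξ p.1).1, fun p ↦ (ξ p.1).2.1, fun p ↦ (ξ p.1).2.2,
    fun p ↦ f ((ξ p.1).1, (ξ p.1).2.1) p.2, fun p ↦ p.2, by fun_prop, by fun_prop, by fun_prop,
    by fun_prop, by fun_prop, ?_, ?_, (indepFun_prod hξ measurable_subtype_coe).symm,
    fun q ↦ f (q.1, q.2.1) (Set.projIcc 0 1 zero_le_one q.2.2), by fun_prop,
    ae_of_all _ fun p ↦ by simp⟩
  · refine Measure.ext_of_singleton fun ⟨x, t, z, y⟩ ↦ ?_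
    rw [← map_singleton_mul_condDistrib_of_condIndep hX hT hZ hY (hCI z y x t), ← hξ_law,
      ← hf_law, Measure.map_apply (by fun_prop) (measurableSet_singleton _),
      Measure.map_apply hξ (measurableSet_singleton _),
      Measure.map_apply (by fun_prop) (measurableSet_singleton _), ← Measure.prod_prod]
    congr 1
    ext ⟨u, w⟩
    simp only [Set.mem_preimage, Set.mem_singleton_iff, Set.mem_prod, Prod.ext_iff]
    grind
  · exact (measurePreserving_coe.comp measurePreserving_snd).map_eq
end
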